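/- arXiv:1604.04274 — 3 statements merged into one kernel-verified Lean document; each statement's English description precedes it below -/
import Mathlib

section
/- Let 0 < a < b be reals, α ∈ (0,1), n a positive integer, ΔT = ln(b/a)/n, and for k ∈ {0,1,…,n} set t_k = a·exp(k·ΔT). Let x : [a,b] → ℝ be of class C², and set M₁ = max_{τ∈[a,b]} |x'(τ)|, M₂ = max_{τ∈[a,b]} |x''(τ)|. Then for every N ∈ {1,…,n}, the discretization error satisfies | ₐD_{t_N}^α x − (x(a)/Γ(1−α))·(ln(t_N/a))^{−α} − ψ·∑_{k=1}^{N} ω_{N−k+1}^α · ((x(t_k) − x(t_{k−1}))/exp(k·ΔT))·t_k | ≤ ((M₁ + (3/2)·M₂·b)/Γ(2−α))·(b−a)·(ΔT)^{1−α}, where ψ = (ΔT)^{1−α}/(a·(1−exp(−ΔT))·Γ(2−α)) and ω_k^α = k^{1−α} − (k−1)^{1−α}. -/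
open Real Set intervalIntegral MeasureTheory

/-!
With `T = t_N`, write the integrand as `(log (T/τ)^(-α) / τ) · (τ x'(τ))`. The kernel
`log (T/τ)^(-α) / τ` is nonnegative with primitive `-log (T/τ)^(1-α) / (1-α)`, so its mass on
the cell `[t_{k-1}, t_k]` of the logarithmic grid is `ΔT^(1-α) ω_{N-k+1} / (1-α)`, which is at
most `ΔT^(1-α) / (1-α)`. Hence the scheme is exactly the quadrature replacing `τ x'(τ)` on each
cell by `t_k` times the secant slope of `x`; by the mean value theorem (applied to `x` and to
`x'`) this replacement is off by at most `(M₁ + M₂ t_k)(t_k - t_{k-1})`, and summing over the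
cells the lengths `t_k - t_{k-1}` telescope to `t_N - a ≤ b - a`.
-/

section HadamardKernel

variable {α T : ℝ}

theorem hasDerivAt_neg_log_div_rpow_div (hα : α ≠ 1) {τ : ℝ} (hτ : 0 < τ) (hτT : τ < T) :
    HasDerivAt (fun s => -log (T / s) ^ (1 - α) / (1 - α)) (log (T / τ) ^ (-α) / τ) τ := by
  have hlog : 0 < log (T / τ) := log_pos ((one_lt_div hτ).2 hτT)
  have hdiv : HasDerivAt (fun s => T / s) (-(T / τ ^ 2)) τ := by
    simpa [div_eq_mul_inv] using (hasDerivAt_inv hτ.ne').const_mul T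
  refine (((hdiv.log (div_pos (hτ.trans hτT) hτ).ne').rpow_const (p := 1 - α)
    (Or.inl hlog.ne')).neg.div_const (1 - α)).congr_deriv ?_
  rw [sub_sub_cancel_left]
  field_simp [(hτ.trans hτT).ne', sub_ne_zero.2 hα.symm]

theorem continuousOn_log_div_rpow (hα : α ≤ 1) (hT : 0 < T) :
    ContinuousOn (fun s => log (T / s) ^ (1 - α)) (Ioi 0) := by
  refine ContinuousOn.rpow_const ?_ fun _ _ => Or.inr (by linarith)
  exact (continuousOn_const.div continuousOn_id fun s hs => (ne_of_gt hs)).log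
    fun s hs => (div_pos hT hs).ne'

variable {c d : ℝ}

theorem log_div_rpow_div_nonneg {τ : ℝ} (hτ : 0 < τ) (hτT : τ ≤ T) :
    0 ≤ log (T / τ) ^ (-α) / τ :=
  div_nonneg (rpow_nonneg (log_nonneg ((one_le_div hτ).2 hτT)) _) hτ.le

theorem intervalIntegrable_log_div_rpow_div (hα : α < 1) (hc : 0 < c) (hcd : c ≤ d)
    (hdT : d ≤ T) : IntervalIntegrable (fun τ => log (T / τ) ^ (-α) / τ) volume c d := by
  have hT : 0 < T := hc.trans_le (hcd.trans hdT)
  refine intervalIntegrable_deriv_of_nonneg (g := fun s => -log (T / s) ^ (1 - α) / (1 - α))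
    ?_ (fun τ hτ => ?_) fun τ hτ => ?_
  · rw [uIcc_of_le hcd]
    exact ((continuousOn_log_div_rpow hα.le hT).mono fun s hs => hc.trans_le hs.1).neg.div_const
      _
  all_goals rw [min_eq_left hcd, max_eq_right hcd] at hτ
  · exact hasDerivAt_neg_log_div_rpow_div hα.ne (hc.trans hτ.1) (hτ.2.trans_le hdT)
  · exact log_div_rpow_div_nonneg (hc.trans hτ.1) (hτ.2.trans_le hdT).le

theorem integral_log_div_rpow_div (hα : α < 1) (hc : 0 < c) (hcd : c ≤ d) (hdT : d ≤ T) :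
    ∫ τ in c..d, log (T / τ) ^ (-α) / τ
      = (log (T / c) ^ (1 - α) - log (T / d) ^ (1 - α)) / (1 - α) := by
  have hT : 0 < T := hc.trans_le (hcd.trans hdT)
  rw [integral_eq_sub_of_hasDerivAt_of_le hcd
    (((continuousOn_log_div_rpow hα.le hT).mono fun s hs => hc.trans_le hs.1).neg.div_const _)
    (fun τ hτ => hasDerivAt_neg_log_div_rpow_div hα.ne (hc.trans hτ.1) (hτ.2.trans_le hdT))
    (intervalIntegrable_log_div_rpow_div hα hc hcd hdT)]
  simp only [Pi.neg_apply]
  ring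

theorem intervalIntegrable_log_div_rpow_mul (hα : α < 1) (hc : 0 < c) (hcd : c ≤ d)
    (hdT : d ≤ T) {g : ℝ → ℝ} (hg : ContinuousOn g (Icc c d)) :
    IntervalIntegrable (fun τ => log (T / τ) ^ (-α) * g τ) volume c d := by
  refine ((intervalIntegrable_log_div_rpow_div hα hc hcd hdT).mul_continuousOn
    (g := fun τ => τ * g τ) (by rw [uIcc_of_le hcd]; exact continuousOn_id.mul hg)).congr
    fun τ hτ => ?_
  rw [uIoc_of_le hcd] at hτ
  field_simp [(hc.trans hτ.1).ne']

end HadamardKernel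

section SecantEstimates

variable {c d : ℝ} {x x' x'' : ℝ → ℝ}

theorem abs_deriv_sub_slope_le {M : ℝ} (hcd : c < d)
    (hx' : ∀ u ∈ Icc c d, HasDerivWithinAt x (x' u) (Icc c d) u)
    (hx'' : ∀ u ∈ Icc c d, HasDerivWithinAt x' (x'' u) (Icc c d) u)
    (hM : ∀ u ∈ Icc c d, |x'' u| ≤ M) {τ : ℝ} (hτ : τ ∈ Icc c d) :
    |x' τ - (x d - x c) / (d - c)| ≤ M * (d - c) := by
  have hM0 : 0 ≤ M := (abs_nonneg _).trans (hM τ hτ)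
  have hlip : ∀ u ∈ Icc c d, ‖x' u - 1 * x' τ‖ ≤ M * (d - c) := fun u hu => by
    rw [one_mul]
    refine ((convex_Icc c d).norm_image_sub_le_of_norm_hasDerivWithin_le hx'' hM hτ hu).trans ?_
    gcongr
    rw [Real.norm_eq_abs, abs_le]
    constructor <;> linarith [hu.1, hu.2, hτ.1, hτ.2]
  have hmvt := (convex_Icc c d).norm_image_sub_le_of_norm_hasDerivWithin_le
    (fun u hu => (hx' u hu).sub ((hasDerivWithinAt_id u _).mul_const (x' τ))) hlip
    (left_mem_Icc.2 hcd.le) (right_mem_Icc.2 hcd.le)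
  rw [Real.norm_eq_abs, Real.norm_eq_abs, abs_of_pos (sub_pos.2 hcd)] at hmvt
  have hsub : 0 < d - c := sub_pos.2 hcd
  rw [show x' τ - (x d - x c) / (d - c) = -((x d - d * x' τ) - (x c - c * x' τ)) / (d - c) by
    field_simp; ring, abs_div, abs_neg, abs_of_pos hsub, div_le_iff₀ hsub]
  exact hmvt

theorem abs_mul_deriv_sub_mul_slope_le {M₁ M₂ : ℝ} (hc : 0 ≤ c) (hcd : c < d)
    (hx' : ∀ u ∈ Icc c d, HasDerivWithinAt x (x' u) (Icc c d) u)
    (hx'' : ∀ u ∈ Icc c d, HasDerivWithinAt x' (x'' u) (Icc c d) u)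
    (hM₁ : ∀ u ∈ Icc c d, |x' u| ≤ M₁) (hM₂ : ∀ u ∈ Icc c d, |x'' u| ≤ M₂)
    {τ : ℝ} (hτ : τ ∈ Icc c d) :
    |τ * x' τ - d * ((x d - x c) / (d - c))| ≤ (M₁ + M₂ * d) * (d - c) := by
  have hd : 0 ≤ d := hc.trans hcd.le
  calc |τ * x' τ - d * ((x d - x c) / (d - c))|
      = |(τ - d) * x' τ + d * (x' τ - (x d - x c) / (d - c))| := by ring_nf
    _ ≤ (d - c) * M₁ + d * (M₂ * (d - c)) := by
      refine (abs_add_le _ _).trans (add_le_add ?_ ?_) <;> rw [abs_mul]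
      · exact mul_le_mul (by rw [abs_le]; constructor <;> linarith [hτ.1, hτ.2]) (hM₁ τ hτ)
          (abs_nonneg _) (by linarith)
      · rw [abs_of_nonneg hd]
        exact mul_le_mul_of_nonneg_left (abs_deriv_sub_slope_le hcd hx' hx'' hM₂ hτ) hd
    _ = (M₁ + M₂ * d) * (d - c) := by ring

theorem abs_integral_mul_sub_mul_integral_le {f g : ℝ → ℝ} {C E : ℝ} (hcd : c ≤ d)
    (hf : IntervalIntegrable f volume c d)
    (hfg : IntervalIntegrable (fun τ => f τ * g τ) volume c d)
    (hf0 : ∀ τ ∈ Ioc c d, 0 ≤ f τ) (hg : ∀ τ ∈ Ioc c d, |g τ - C| ≤ E) :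
    |(∫ τ in c..d, f τ * g τ) - C * ∫ τ in c..d, f τ| ≤ E * ∫ τ in c..d, f τ := by
  rw [← intervalIntegral.integral_const_mul, ← integral_sub hfg (hf.const_mul C),
    ← intervalIntegral.integral_const_mul, ← Real.norm_eq_abs]
  refine norm_integral_le_of_norm_le hcd (ae_of_all _ fun τ hτ => ?_) (hf.const_mul E)
  rw [Real.norm_eq_abs, show f τ * g τ - C * f τ = f τ * (g τ - C) by ring, abs_mul,
    abs_of_nonneg (hf0 τ hτ), mul_comm E]
  exact mul_le_mul_of_nonneg_left (hg τ hτ) (hf0 τ hτ)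

end SecantEstimates

section Quadrature

variable {α T M₁ M₂ : ℝ} {x x' x'' : ℝ → ℝ}

theorem abs_integral_log_div_rpow_mul_deriv_sub_le {c d : ℝ} (hα : α < 1) (hc : 0 < c)
    (hcd : c < d) (hdT : d ≤ T)
    (hx' : ∀ u ∈ Icc c d, HasDerivWithinAt x (x' u) (Icc c d) u)
    (hx'' : ∀ u ∈ Icc c d, HasDerivWithinAt x' (x'' u) (Icc c d) u)
    (hM₁ : ∀ u ∈ Icc c d, |x' u| ≤ M₁) (hM₂ : ∀ u ∈ Icc c d, |x'' u| ≤ M₂) :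
    |(∫ τ in c..d, log (T / τ) ^ (-α) * x' τ)
        - d * ((x d - x c) / (d - c)) * ∫ τ in c..d, log (T / τ) ^ (-α) / τ|
      ≤ (M₁ + M₂ * d) * (d - c) * ∫ τ in c..d, log (T / τ) ^ (-α) / τ := by
  have hκ := intervalIntegrable_log_div_rpow_div hα hc hcd.le hdT
  have hτx' : ContinuousOn (fun τ => τ * x' τ) (Icc c d) :=
    continuousOn_id.mul fun u hu => (hx'' u hu).continuousWithinAt
  rw [integral_congr (g := fun τ => log (T / τ) ^ (-α) / τ * (τ * x' τ)) fun τ hτ => by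
    rw [uIcc_of_le hcd.le] at hτ
    field_simp [(hc.trans_le hτ.1).ne']]
  exact abs_integral_mul_sub_mul_integral_le hcd.le hκ
    (hκ.mul_continuousOn (by rwa [uIcc_of_le hcd.le]))
    (fun τ hτ => log_div_rpow_div_nonneg (hc.trans hτ.1) (hτ.2.trans hdT))
    fun τ hτ =>
      abs_mul_deriv_sub_mul_slope_le hc.le hcd hx' hx'' hM₁ hM₂ (Ioc_subset_Icc_self hτ)

theorem abs_integral_log_div_rpow_mul_deriv_sub_le_of_le {c d K : ℝ} (hα : α < 1)
    (hc : 0 < c) (hcd : c < d) (hdT : d ≤ T)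
    (hx' : ∀ u ∈ Icc c d, HasDerivWithinAt x (x' u) (Icc c d) u)
    (hx'' : ∀ u ∈ Icc c d, HasDerivWithinAt x' (x'' u) (Icc c d) u)
    (hM₁ : ∀ u ∈ Icc c d, |x' u| ≤ M₁) (hM₂ : ∀ u ∈ Icc c d, |x'' u| ≤ M₂)
    (hK : ∫ τ in c..d, log (T / τ) ^ (-α) / τ ≤ K) :
    |(∫ τ in c..d, log (T / τ) ^ (-α) * x' τ)
        - d * ((x d - x c) / (d - c)) * ∫ τ in c..d, log (T / τ) ^ (-α) / τ|
      ≤ (M₁ + M₂ * T) * (d - c) * K := by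
  have hM₁₀ : 0 ≤ M₁ := (abs_nonneg _).trans (hM₁ c (left_mem_Icc.2 hcd.le))
  have hM₂₀ : 0 ≤ M₂ := (abs_nonneg _).trans (hM₂ c (left_mem_Icc.2 hcd.le))
  have hκ₀ : 0 ≤ ∫ τ in c..d, log (T / τ) ^ (-α) / τ := integral_nonneg hcd.le fun τ hτ =>
    log_div_rpow_div_nonneg (hc.trans_le hτ.1) (hτ.2.trans hdT)
  refine (abs_integral_log_div_rpow_mul_deriv_sub_le hα hc hcd hdT hx' hx'' hM₁ hM₂).trans ?_
  gcongr
  exact mul_nonneg (add_nonneg hM₁₀ (mul_nonneg hM₂₀ (by linarith))) (by linarith)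

theorem abs_integral_log_div_rpow_mul_deriv_sub_sum_le {t : ℕ → ℝ} {N : ℕ} {K : ℝ}
    (hα : α < 1) (ht : StrictMono t) (ht0 : 0 < t 0)
    (hx' : ∀ u ∈ Icc (t 0) (t N), HasDerivWithinAt x (x' u) (Icc (t 0) (t N)) u)
    (hx'' : ∀ u ∈ Icc (t 0) (t N), HasDerivWithinAt x' (x'' u) (Icc (t 0) (t N)) u)
    (hM₁ : ∀ u ∈ Icc (t 0) (t N), |x' u| ≤ M₁) (hM₂ : ∀ u ∈ Icc (t 0) (t N), |x'' u| ≤ M₂)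
    (hK : ∀ i < N, ∫ τ in t i..t (i + 1), log (t N / τ) ^ (-α) / τ ≤ K) :
    |(∫ τ in t 0..t N, log (t N / τ) ^ (-α) * x' τ)
        - ∑ i ∈ Finset.range N, t (i + 1) * ((x (t (i + 1)) - x (t i)) / (t (i + 1) - t i))
            * ∫ τ in t i..t (i + 1), log (t N / τ) ^ (-α) / τ|
      ≤ (M₁ + M₂ * t N) * (t N - t 0) * K := by
  have hpos : ∀ i, 0 < t i := fun i => ht0.trans_le (ht.monotone i.zero_le)
  have hcell : ∀ i < N, Icc (t i) (t (i + 1)) ⊆ Icc (t 0) (t N) := fun i hi =>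
    Icc_subset_Icc (ht.monotone i.zero_le) (ht.monotone hi)
  rw [← sum_integral_adjacent_intervals fun i hi =>
      intervalIntegrable_log_div_rpow_mul hα (hpos i) (ht (Nat.lt_add_one i)).le (ht.monotone hi)
        fun u hu => ((hx'' u (hcell i hi hu)).mono (hcell i hi)).continuousWithinAt,
    ← Finset.sum_sub_distrib]
  calc _ ≤ ∑ i ∈ Finset.range N, (M₁ + M₂ * t N) * (t (i + 1) - t i) * K :=
        (Finset.abs_sum_le_sum_abs _ _).trans <| Finset.sum_le_sum fun i hi => by
          rw [Finset.mem_range] at hi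
          have hsub := hcell i hi
          exact abs_integral_log_div_rpow_mul_deriv_sub_le_of_le hα (hpos i)
            (ht (Nat.lt_add_one i)) (ht.monotone hi) (fun u hu => (hx' u (hsub hu)).mono hsub)
            (fun u hu => (hx'' u (hsub hu)).mono hsub) (fun u hu => hM₁ u (hsub hu))
            (fun u hu => hM₂ u (hsub hu)) (hK i hi)
    _ = (M₁ + M₂ * t N) * (t N - t 0) * K := by
      rw [← Finset.sum_mul, ← Finset.mul_sum, Finset.sum_range_sub]

end Quadrature

theorem sum_Icc_one_eq_sum_range {M : Type*} [AddCommMonoid M] (f : ℕ → M) (N : ℕ) :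
    ∑ k ∈ Finset.Icc 1 N, f k = ∑ i ∈ Finset.range N, f (i + 1) := by
  rw [Finset.range_eq_Ico, Finset.sum_Ico_add', ← Finset.Ico_add_one_right_eq_Icc]

theorem one_div_Gamma_mul_div_one_sub {α : ℝ} (hα : α < 1) (y : ℝ) :
    1 / Gamma (1 - α) * (y / (1 - α)) = y / Gamma (2 - α) := by
  have : Gamma (1 - α) ≠ 0 := (Gamma_pos_of_pos (by linarith)).ne'
  rw [show (2 : ℝ) - α = (1 - α) + 1 by ring, Gamma_add_one (by linarith)]
  field_simp

section LogGrid

variable {a h α : ℝ}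

theorem strictMono_mul_exp_nat_mul (ha : 0 < a) (hh : 0 < h) :
    StrictMono fun k : ℕ => a * exp (k * h) := fun _ _ hij =>
  mul_lt_mul_of_pos_left (exp_lt_exp.2 (mul_lt_mul_of_pos_right (Nat.cast_lt.2 hij) hh)) ha

theorem log_mul_exp_div_mul_exp (ha : a ≠ 0) (p q : ℝ) :
    log (a * exp p / (a * exp q)) = p - q := by
  rw [mul_div_mul_left _ _ ha, ← exp_sub, log_exp]

theorem rpow_sub_rpow_sub_one_le_one {y p : ℝ} (hy : 1 ≤ y) (hp₀ : 0 ≤ p) (hp₁ : p ≤ 1) :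
    y ^ p - (y - 1) ^ p ≤ 1 := by
  have := rpow_add_le_add_rpow (sub_nonneg.2 hy) zero_le_one hp₀ hp₁
  rw [sub_add_cancel, one_rpow] at this
  linarith

theorem integral_log_div_rpow_div_logGrid (hα : α < 1) (ha : 0 < a) (hh : 0 ≤ h) {i N : ℕ}
    (hi : i < N) :
    ∫ τ in a * exp (i * h)..a * exp ((i + 1 : ℕ) * h), log (a * exp (N * h) / τ) ^ (-α) / τ
      = h ^ (1 - α) * (((N - i : ℕ) : ℝ) ^ (1 - α) - (((N - i : ℕ) : ℝ) - 1) ^ (1 - α))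
          / (1 - α) := by
  have hNi : (1 : ℝ) ≤ ((N - i : ℕ) : ℝ) := by exact_mod_cast Nat.le_sub_of_add_le' hi
  rw [integral_log_div_rpow_div hα (by positivity) (by gcongr; simp)
      (by gcongr; exact_mod_cast hi),
    log_mul_exp_div_mul_exp ha.ne', log_mul_exp_div_mul_exp ha.ne',
    show (N : ℝ) * h - i * h = ((N - i : ℕ) : ℝ) * h by rw [Nat.cast_sub hi.le]; ring,
    show (N : ℝ) * h - (i + 1 : ℕ) * h = (((N - i : ℕ) : ℝ) - 1) * h by
      rw [Nat.cast_sub hi.le]; push_cast; ring,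
    mul_rpow (by linarith) hh, mul_rpow (by linarith) hh]
  ring

theorem integral_log_div_rpow_div_logGrid_le (hα₀ : 0 ≤ α) (hα : α < 1) (ha : 0 < a)
    (hh : 0 ≤ h) {i N : ℕ} (hi : i < N) :
    ∫ τ in a * exp (i * h)..a * exp ((i + 1 : ℕ) * h), log (a * exp (N * h) / τ) ^ (-α) / τ
      ≤ h ^ (1 - α) / (1 - α) := by
  rw [integral_log_div_rpow_div_logGrid hα ha hh hi]
  have hNi : (1 : ℝ) ≤ ((N - i : ℕ) : ℝ) := by exact_mod_cast Nat.le_sub_of_add_le' hi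
  have := rpow_sub_rpow_sub_one_le_one hNi (by linarith : 0 ≤ 1 - α) (by linarith)
  gcongr
  exact mul_le_of_le_one_right (by positivity) this

theorem logGrid_weight_eq (hα : α < 1) (ha : 0 < a) (hh : 0 < h) {i N : ℕ} (hi : i < N)
    (Δ : ℝ) :
    h ^ (1 - α) / (a * (1 - exp (-h)) * Gamma (2 - α))
        * ((((N - i : ℕ) : ℝ) ^ (1 - α) - (((N - i : ℕ) : ℝ) - 1) ^ (1 - α))
          * (Δ / exp ((i + 1 : ℕ) * h)) * (a * exp ((i + 1 : ℕ) * h)))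
      = 1 / Gamma (1 - α) * (a * exp ((i + 1 : ℕ) * h)
          * (Δ / (a * exp ((i + 1 : ℕ) * h) - a * exp (i * h)))
          * ∫ τ in a * exp (i * h)..a * exp ((i + 1 : ℕ) * h),
              log (a * exp (N * h) / τ) ^ (-α) / τ) := by
  rw [integral_log_div_rpow_div_logGrid hα ha hh.le hi,
    show (2 : ℝ) - α = (1 - α) + 1 by ring, Gamma_add_one (by linarith),
    show exp ((i + 1 : ℕ) * h) = exp (i * h) * exp h by rw [← exp_add]; push_cast; ring_nf,
    exp_neg]
  have : exp h - 1 ≠ 0 := sub_ne_zero.2 (one_lt_exp_iff.2 hh).ne'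
  field_simp

theorem logGrid_scheme_sum_eq {t : ℕ → ℝ} (ht : ∀ k, t k = a * exp (k * h)) (hα : α < 1)
    (ha : 0 < a) (hh : 0 < h) (x : ℝ → ℝ) (N : ℕ) :
    h ^ (1 - α) / (a * (1 - exp (-h)) * Gamma (2 - α)) * ∑ k ∈ Finset.Icc 1 N,
        (((N - k + 1 : ℕ) : ℝ) ^ (1 - α) - (((N - k + 1 : ℕ) : ℝ) - 1) ^ (1 - α))
          * ((x (t k) - x (t (k - 1))) / exp (k * h)) * t k
      = 1 / Gamma (1 - α) * ∑ i ∈ Finset.range N,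
          t (i + 1) * ((x (t (i + 1)) - x (t i)) / (t (i + 1) - t i))
            * ∫ τ in t i..t (i + 1), log (t N / τ) ^ (-α) / τ := by
  obtain rfl : t = fun k : ℕ => a * exp (k * h) := funext ht
  rw [sum_Icc_one_eq_sum_range, Finset.mul_sum, Finset.mul_sum]
  refine Finset.sum_congr rfl fun i hi => ?_
  rw [Nat.add_sub_cancel, show N - (i + 1) + 1 = N - i by grind]
  exact logGrid_weight_eq hα ha hh (Finset.mem_range.1 hi) _

end LogGrid

theorem hadamard_discretization_error_bound_general
    (a b α : ℝ) (ha : 0 < a) (hab : a < b) (hα : α ∈ Set.Ioo (0 : ℝ) 1)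
    (n : ℕ) (hn : 0 < n)
    (x x' x'' : ℝ → ℝ)
    (hx' : ∀ τ ∈ Set.Icc a b, HasDerivWithinAt x (x' τ) (Set.Icc a b) τ)
    (hx'' : ∀ τ ∈ Set.Icc a b, HasDerivWithinAt x' (x'' τ) (Set.Icc a b) τ)
    (M₁ M₂ : ℝ)
    (hM₁ : IsGreatest ((fun τ => |x' τ|) '' Set.Icc a b) M₁)
    (hM₂ : IsGreatest ((fun τ => |x'' τ|) '' Set.Icc a b) M₂)
    (N : ℕ) (hNn : N ≤ n) :
    let ΔT : ℝ := Real.log (b / a) / n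
    let t : ℕ → ℝ := fun k => a * Real.exp (k * ΔT)
    let ψ : ℝ := ΔT ^ (1 - α) / (a * (1 - Real.exp (-ΔT)) * Real.Gamma (2 - α))
    let ω : ℕ → ℝ := fun k => (k : ℝ) ^ (1 - α) - ((k : ℝ) - 1) ^ (1 - α)
    -- the left Hadamard fractional derivative of `x` at `t_N`
    -- (representation for absolutely continuous functions)
    let D : ℝ := x a / Real.Gamma (1 - α) * Real.log (t N / a) ^ (-α)
      + (1 / Real.Gamma (1 - α)) * ∫ τ in a..(t N), Real.log (t N / τ) ^ (-α) * x' τ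
    |D - x a / Real.Gamma (1 - α) * Real.log (t N / a) ^ (-α)
        - ψ * ∑ k ∈ Finset.Icc 1 N,
            ω (N - k + 1) * ((x (t k) - x (t (k - 1))) / Real.exp (k * ΔT)) * t k|
      ≤ (M₁ + (3 / 2) * M₂ * b) / Real.Gamma (2 - α) * (b - a) * ΔT ^ (1 - α) := by
  intro ΔT t ψ ω D
  obtain ⟨hα₀, hα₁⟩ := hα
  have hΔT : 0 < ΔT := div_pos (log_pos ((one_lt_div ha).2 hab)) (Nat.cast_pos.2 hn)
  have ht : StrictMono t := strictMono_mul_exp_nat_mul ha hΔT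
  have ht0 : t 0 = a := by simp [t]
  have htN : t N ≤ b := (ht.monotone hNn).trans_eq <| by
    simp only [t, ΔT]
    rw [mul_div_cancel₀ _ (Nat.cast_pos.2 hn).ne', exp_log (div_pos (ha.trans hab) ha)]
    field_simp
  have hsub : Icc (t 0) (t N) ⊆ Icc a b := ht0 ▸ Icc_subset_Icc_right htN
  have hquad := abs_integral_log_div_rpow_mul_deriv_sub_sum_le hα₁ ht (ht0 ▸ ha)
    (fun u hu => (hx' u (hsub hu)).mono hsub) (fun u hu => (hx'' u (hsub hu)).mono hsub)
    (fun u hu => hM₁.2 ⟨u, hsub hu, rfl⟩) (fun u hu => hM₂.2 ⟨u, hsub hu, rfl⟩)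
    fun i hi => integral_log_div_rpow_div_logGrid_le hα₀.le hα₁ ha hΔT.le hi
  rw [ht0] at hquad
  simp only [D, add_sub_cancel_left]
  rw [logGrid_scheme_sum_eq (t := t) (fun _ => rfl) hα₁ ha hΔT x N, ← mul_sub, abs_mul,
    abs_of_pos (one_div_pos.2 (Gamma_pos_of_pos (by linarith)))]
  refine (mul_le_mul_of_nonneg_left hquad (by positivity)).trans ?_
  rw [← mul_div_assoc, one_div_Gamma_mul_div_one_sub hα₁, div_mul_eq_mul_div, div_mul_eq_mul_div]
  have hM₁₀ : 0 ≤ M₁ := (abs_nonneg _).trans (hM₁.2 ⟨a, left_mem_Icc.2 hab.le, rfl⟩)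
  have hM₂₀ : 0 ≤ M₂ := (abs_nonneg _).trans (hM₂.2 ⟨a, left_mem_Icc.2 hab.le, rfl⟩)
  have hM : M₁ + M₂ * t N ≤ M₁ + 3 / 2 * M₂ * b := by nlinarith
  have htNa : a ≤ t N := ht0 ▸ ht.monotone N.zero_le
  gcongr
  · exact (Gamma_pos_of_pos (by linarith)).le
  · nlinarith

/-- Error bound for the discretization of the left Hadamard fractional
derivative of a `C²` function `x` on `[a,b]`, on the logarithmic grid
`t_k = a·exp(k·ΔT)`, `ΔT = ln(b/a)/n`. -/
theorem hadamard_discretization_error_bound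
    (a b α : ℝ) (ha : 0 < a) (hab : a < b) (hα : α ∈ Set.Ioo (0 : ℝ) 1)
    (n : ℕ) (hn : 0 < n)
    (x x' x'' : ℝ → ℝ)
    (hx' : ∀ τ ∈ Set.Icc a b, HasDerivWithinAt x (x' τ) (Set.Icc a b) τ)
    (hx'' : ∀ τ ∈ Set.Icc a b, HasDerivWithinAt x' (x'' τ) (Set.Icc a b) τ)
    (hx''cont : ContinuousOn x'' (Set.Icc a b))
    (M₁ M₂ : ℝ)
    (hM₁ : IsGreatest ((fun τ => |x' τ|) '' Set.Icc a b) M₁)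
    (hM₂ : IsGreatest ((fun τ => |x'' τ|) '' Set.Icc a b) M₂)
    (N : ℕ) (hN₁ : 1 ≤ N) (hNn : N ≤ n) :
    let ΔT : ℝ := Real.log (b / a) / n
    let t : ℕ → ℝ := fun k => a * Real.exp (k * ΔT)
    let ψ : ℝ := ΔT ^ (1 - α) / (a * (1 - Real.exp (-ΔT)) * Real.Gamma (2 - α))
    let ω : ℕ → ℝ := fun k => (k : ℝ) ^ (1 - α) - ((k : ℝ) - 1) ^ (1 - α)
    -- the left Hadamard fractional derivative of `x` at `t_N`
    -- (representation for absolutely continuous functions)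
    let D : ℝ := x a / Real.Gamma (1 - α) * Real.log (t N / a) ^ (-α)
      + (1 / Real.Gamma (1 - α)) * ∫ τ in a..(t N), Real.log (t N / τ) ^ (-α) * x' τ
    |D - x a / Real.Gamma (1 - α) * Real.log (t N / a) ^ (-α)
        - ψ * ∑ k ∈ Finset.Icc 1 N,
            ω (N - k + 1) * ((x (t k) - x (t (k - 1))) / Real.exp (k * ΔT)) * t k|
      ≤ (M₁ + (3 / 2) * M₂ * b) / Real.Gamma (2 - α) * (b - a) * ΔT ^ (1 - α) :=
  hadamard_discretization_error_bound_general a b α ha hab hα n hn x x' x'' hx' hx'' M₁ M₂ hM₁ hM₂ N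
    hNn
end

section
/- Let 0 < a < b, α ∈ (0,1), n a positive integer, ΔT = ln(b/a)/n, and t_k = a·exp(k·ΔT) for k ∈ {0,…,n}. Then for all integers 1 ≤ k ≤ N ≤ n, 0 ≤ ∫_{t_{k−1}}^{t_k} (ln(t_N/τ))^{−α} · (1/τ) dτ ≤ (ΔT)^{1−α}/(1−α). -/
open Real Set intervalIntegral

/-!
The substitution `u = log (t_N / τ)` maps the cell `[t_{k-1}, t_k]` onto
`[c, c + ΔT]` with `c = (N - k) ΔT ≥ 0` and turns the kernel into `u ^ (-α)`. Hence the integral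
equals `((c + ΔT) ^ (1 - α) - c ^ (1 - α)) / (1 - α)`, which is at most `ΔT ^ (1 - α) / (1 - α)`
by subadditivity of `x ↦ x ^ (1 - α)`.
-/

theorem integral_log_div_rpow_mul_inv {T : ℝ} (hT : 0 < T) (p c d : ℝ) :
    ∫ τ in T * exp (-d)..T * exp (-c), log (T / τ) ^ p * (1 / τ) = ∫ u in c..d, u ^ p := by
  have hsubst := integral_comp_mul_deriv_of_deriv_nonpos (a := c) (b := d)
    (f := fun u => T * exp (-u)) (f' := fun u => -(T * exp (-u)))
    (g := fun τ => log (T / τ) ^ p * (1 / τ)) (by fun_prop)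
    (fun u _ => by simpa using (hasDerivAt_neg u).exp.const_mul T)
    (fun u _ => neg_nonpos.2 (by positivity))
  have hintegrand (u : ℝ) :
      log (T / (T * exp (-u))) ^ p * (1 / (T * exp (-u))) * -(T * exp (-u)) = -u ^ p := by
    rw [div_mul_cancel_left₀ hT.ne', exp_neg, inv_inv, log_exp]
    field_simp
  simp only [Function.comp_def, hintegrand, intervalIntegral.integral_neg] at hsubst
  rw [integral_symm, ← hsubst, neg_neg]

theorem integral_rpow_neg_le {c Δ α : ℝ} (hc : 0 ≤ c) (hΔ : 0 ≤ Δ) (hα₁ : α < 1) (hα₀ : 0 ≤ α) :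
    ∫ u in c..c + Δ, u ^ (-α) ≤ Δ ^ (1 - α) / (1 - α) := by
  rw [integral_rpow (Or.inl (by linarith)), neg_add_eq_sub]
  gcongr
  linarith [Real.rpow_add_le_add_rpow hc hΔ (by linarith : 0 ≤ 1 - α) (by linarith)]

theorem hadamard_kernel_cell_integral_bounds_general
    (a b α : ℝ) (ha : 0 < a) (hab : a < b) (hα : α ∈ Set.Ioo (0 : ℝ) 1)
    (n : ℕ)
    (k N : ℕ) (hk : 1 ≤ k) (hkN : k ≤ N) :
    let ΔT : ℝ := Real.log (b / a) / n
    let t : ℕ → ℝ := fun j => a * Real.exp (j * ΔT)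
    0 ≤ (∫ τ in (t (k - 1))..(t k), Real.log (t N / τ) ^ (-α) * (1 / τ)) ∧
      (∫ τ in (t (k - 1))..(t k), Real.log (t N / τ) ^ (-α) * (1 / τ))
        ≤ ΔT ^ (1 - α) / (1 - α) := by
  intro ΔT t
  have hΔT : 0 ≤ ΔT := div_nonneg (log_nonneg ((one_le_div ha).2 hab.le)) n.cast_nonneg
  set c : ℝ := ((N : ℝ) - k) * ΔT
  have hc : 0 ≤ c := mul_nonneg (sub_nonneg.2 (by exact_mod_cast hkN)) hΔT
  have hgrid (j : ℝ) : a * exp (j * ΔT) = t N * exp (-((N - j) * ΔT)) := by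
    rw [mul_assoc, ← exp_add]
    ring_nf
  have htk : t k = t N * exp (-c) := hgrid k
  have htk₁ : t (k - 1) = t N * exp (-(c + ΔT)) := by
    rw [show t (k - 1) = a * exp (((k : ℝ) - 1) * ΔT) by simp [t, Nat.cast_sub hk], hgrid]
    congr 2
    ring
  rw [htk, htk₁, integral_log_div_rpow_mul_inv (by positivity)]
  exact ⟨integral_nonneg (by linarith) fun u hu => rpow_nonneg (hc.trans hu.1) _,
    integral_rpow_neg_le hc hΔT hα.2 hα.1.le⟩

/-- Bounds for the kernel integral over one cell of the logarithmic
grid `t_k = a·exp(k·ΔT)`, `ΔT = ln(b/a)/n`: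
`0 ≤ ∫_{t_{k−1}}^{t_k} (ln(t_N/τ))^{−α}·(1/τ) dτ ≤ ΔT^{1−α}/(1−α)`. -/
theorem hadamard_kernel_cell_integral_bounds
    (a b α : ℝ) (ha : 0 < a) (hab : a < b) (hα : α ∈ Set.Ioo (0 : ℝ) 1)
    (n : ℕ) (hn : 0 < n)
    (k N : ℕ) (hk : 1 ≤ k) (hkN : k ≤ N) (hNn : N ≤ n) :
    let ΔT : ℝ := Real.log (b / a) / n
    let t : ℕ → ℝ := fun j => a * Real.exp (j * ΔT)
    0 ≤ (∫ τ in (t (k - 1))..(t k), Real.log (t N / τ) ^ (-α) * (1 / τ)) ∧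
      (∫ τ in (t (k - 1))..(t k), Real.log (t N / τ) ^ (-α) * (1 / τ))
        ≤ ΔT ^ (1 - α) / (1 - α) :=
  hadamard_kernel_cell_integral_bounds_general a b α ha hab hα n k N hk hkN
end

section
/- Let 0 < a < b, α ∈ (0,1), n a positive integer, ΔT = ln(b/a)/n, t_k = a·exp(k·ΔT), and let x : [a,b] → ℝ be of class C². For N ∈ {1,…,n}, the discretization error is bounded by the aggregated quadrature error: | ₐD_{t_N}^α x − (x(a)/Γ(1−α))·(ln(t_N/a))^{−α} − ψ·∑_{k=1}^{N} ω_{N−k+1}^α · ((x(t_k) − x(t_{k−1}))/exp(k·ΔT))·t_k | ≤ (1/Γ(1−α))·∑_{k=1}^{N} ∫_{t_{k−1}}^{t_k} (ln(t_N/τ))^{−α}·(1/τ)·| x'(τ)·τ − ((x(t_k) − x(t_{k−1}))/(t_k − t_{k−1}))·t_k | dτ, where ψ = (ΔT)^{1−α}/(a·(1−exp(−ΔT))·Γ(2−α)) and ω_k^α = k^{1−α} − (k−1)^{1−α}. -/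
open Real Set intervalIntegral MeasureTheory

private lemma hadamard_cov {tN p q c d : ℝ} (hp : 0 < p) (hpq : p ≤ q) (hqN : q ≤ tN)
    (hd : Real.log (tN / p) = d) (hc : Real.log (tN / q) = c) (g : ℝ → ℝ) :
    (IntegrableOn (fun τ => g (Real.log (tN / τ)) * (1 / τ)) (Set.Icc p q) ↔
      IntegrableOn g (Set.Icc c d)) ∧
    (∫ τ in Set.Icc p q, g (Real.log (tN / τ)) * (1 / τ)) = ∫ u in Set.Icc c d, g u := by
  have htN : 0 < tN := lt_of_lt_of_le hp (hpq.trans hqN)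
  set f : ℝ → ℝ := fun τ => Real.log (tN / τ) with hf
  have hpos : ∀ τ ∈ Set.Icc p q, 0 < τ := fun τ hτ => lt_of_lt_of_le hp hτ.1
  have hfeq : ∀ τ : ℝ, 0 < τ → f τ = Real.log tN - Real.log τ := fun τ hτ => by
    simp [hf, Real.log_div htN.ne' hτ.ne']
  have hderiv : ∀ τ ∈ Set.Icc p q, HasDerivWithinAt f (-(1 / τ)) (Set.Icc p q) τ := by
    intro τ hτ
    have h1 : HasDerivWithinAt (fun y => Real.log tN - Real.log y) (-(1 / τ))
        (Set.Icc p q) τ := by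
      have := ((Real.hasDerivAt_log (hpos τ hτ).ne').const_sub
        (Real.log tN)).hasDerivWithinAt (s := Set.Icc p q)
      simpa [one_div] using this
    exact h1.congr (fun y hy => hfeq y (hpos y hy)) (hfeq τ (hpos τ hτ))
  have hinj : Set.InjOn f (Set.Icc p q) := by
    intro τ₁ h₁ τ₂ h₂ h
    rw [hfeq _ (hpos _ h₁), hfeq _ (hpos _ h₂)] at h
    have hl : Real.log τ₁ = Real.log τ₂ := by linarith
    have := congrArg Real.exp hl
    rwa [Real.exp_log (hpos _ h₁), Real.exp_log (hpos _ h₂)] at this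
  have hcont : ContinuousOn f (Set.Icc p q) := by
    apply ContinuousOn.log
    · exact continuousOn_const.div continuousOn_id (fun τ hτ => (hpos τ hτ).ne')
    · intro τ hτ
      exact div_ne_zero htN.ne' (hpos τ hτ).ne'
  have hanti : ∀ τ₁ ∈ Set.Icc p q, ∀ τ₂ ∈ Set.Icc p q, τ₁ ≤ τ₂ → f τ₂ ≤ f τ₁ := by
    intro τ₁ h₁ τ₂ h₂ h12
    rw [hfeq _ (hpos _ h₁), hfeq _ (hpos _ h₂)]
    have := Real.log_le_log (hpos _ h₁) h12
    linarith
  have himg : f '' Set.Icc p q = Set.Icc c d := by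
    apply Set.Subset.antisymm
    · rintro _ ⟨τ, hτ, rfl⟩
      exact ⟨hc ▸ hanti τ hτ q (right_mem_Icc.2 hpq) hτ.2,
        hd ▸ hanti p (left_mem_Icc.2 hpq) τ hτ hτ.1⟩
    · have h := intermediate_value_Icc' hpq hcont
      have hfq : f q = c := hc
      have hfp : f p = d := hd
      rwa [hfq, hfp] at h
  have key2 := MeasureTheory.integral_image_eq_integral_abs_deriv_smul
    measurableSet_Icc hderiv hinj g
  have key1 := MeasureTheory.integrableOn_image_iff_integrableOn_abs_deriv_smul
    measurableSet_Icc hderiv hinj g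
  rw [himg] at key1 key2
  have heqon : Set.EqOn (fun τ => |(-(1 / τ))| • g (f τ))
      (fun τ => g (Real.log (tN / τ)) * (1 / τ)) (Set.Icc p q) := by
    intro τ hτ
    have h0 := hpos τ hτ
    show |(-(1 / τ))| • g (f τ) = g (Real.log (tN / τ)) * (1 / τ)
    rw [abs_neg, abs_of_pos (one_div_pos.mpr h0), smul_eq_mul, mul_comm]
  constructor
  · rw [key1]
    exact (integrableOn_congr_fun heqon measurableSet_Icc).symm
  · rw [key2]
    exact (setIntegral_congr_fun measurableSet_Icc heqon).symm

/-- The discretization error of the left Hadamard fractional derivative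
on the logarithmic grid is bounded by the aggregated quadrature error. -/
theorem hadamard_discretization_error_le_quadrature_error
    (a b α : ℝ) (ha : 0 < a) (hab : a < b) (hα : α ∈ Set.Ioo (0 : ℝ) 1)
    (n : ℕ) (hn : 0 < n)
    (x x' x'' : ℝ → ℝ)
    (hx' : ∀ τ ∈ Set.Icc a b, HasDerivWithinAt x (x' τ) (Set.Icc a b) τ)
    (hx'' : ∀ τ ∈ Set.Icc a b, HasDerivWithinAt x' (x'' τ) (Set.Icc a b) τ)
    (hx''cont : ContinuousOn x'' (Set.Icc a b))
    (N : ℕ) (hN₁ : 1 ≤ N) (hNn : N ≤ n) :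
    let ΔT : ℝ := Real.log (b / a) / n
    let t : ℕ → ℝ := fun j => a * Real.exp (j * ΔT)
    let ψ : ℝ := ΔT ^ (1 - α) / (a * (1 - Real.exp (-ΔT)) * Real.Gamma (2 - α))
    let ω : ℕ → ℝ := fun j => (j : ℝ) ^ (1 - α) - ((j : ℝ) - 1) ^ (1 - α)
    -- the left Hadamard fractional derivative of `x` at `t_N`
    let D : ℝ := x a / Real.Gamma (1 - α) * Real.log (t N / a) ^ (-α)
      + (1 / Real.Gamma (1 - α)) * ∫ τ in a..(t N), Real.log (t N / τ) ^ (-α) * x' τ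
    |D - x a / Real.Gamma (1 - α) * Real.log (t N / a) ^ (-α)
        - ψ * ∑ k ∈ Finset.Icc 1 N,
            ω (N - k + 1) * ((x (t k) - x (t (k - 1))) / Real.exp (k * ΔT)) * t k|
      ≤ (1 / Real.Gamma (1 - α)) * ∑ k ∈ Finset.Icc 1 N,
          ∫ τ in (t (k - 1))..(t k),
            Real.log (t N / τ) ^ (-α) * (1 / τ)
              * |x' τ * τ - (x (t k) - x (t (k - 1))) / (t k - t (k - 1)) * t k| := by
  obtain ⟨hα0, hα1⟩ := hα
  intro ΔT t ψ ω D
  have hb : 0 < b := ha.trans hab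
  have hn' : (0 : ℝ) < n := Nat.cast_pos.mpr hn
  have hΔT : 0 < ΔT := div_pos (Real.log_pos ((one_lt_div ha).2 hab)) hn'
  have htpos : ∀ j : ℕ, 0 < t j := fun j => mul_pos ha (Real.exp_pos _)
  have htmono : ∀ i j : ℕ, i ≤ j → t i ≤ t j := by
    intro i j hij
    have h1 : (i : ℝ) * ΔT ≤ (j : ℝ) * ΔT :=
      mul_le_mul_of_nonneg_right (by exact_mod_cast hij) hΔT.le
    exact mul_le_mul_of_nonneg_left (Real.exp_le_exp.2 h1) ha.le
  have ht0 : t 0 = a := by simp [t]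
  have htn : t n = b := by
    show a * Real.exp ((n : ℝ) * (Real.log (b / a) / n)) = b
    have h1 : (n : ℝ) * (Real.log (b / a) / n) = Real.log (b / a) := by
      field_simp
    rw [h1, Real.exp_log (div_pos hb ha), mul_comm, div_mul_cancel₀ _ ha.ne']
  have htb : ∀ j, j ≤ n → t j ≤ b := fun j hj => htn ▸ htmono j n hj
  have hΓpos : 0 < Real.Gamma (1 - α) := Real.Gamma_pos_of_pos (by linarith)
  have hx'cont : ContinuousOn x' (Set.Icc a b) :=
    fun τ hτ => (hx'' τ hτ).continuousWithinAt
  set F : ℝ → ℝ := fun τ => Real.log (t N / τ) ^ (-α) * x' τ with hF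
  set W : ℝ → ℝ := fun τ => Real.log (t N / τ) ^ (-α) * (1 / τ) with hW
  set G : ℕ → ℝ → ℝ := fun k τ =>
    Real.log (t N / τ) ^ (-α) * (1 / τ)
      * ((x (t k) - x (t (k - 1))) / (t k - t (k - 1)) * t k) with hG
  -- weight integral computation
  have hkfacts : ∀ k : ℕ, 1 ≤ k → k ≤ N →
      IntegrableOn W (Set.Icc (t (k - 1)) (t k)) ∧
      (∫ τ in (t (k - 1))..(t k), W τ)
        = ΔT ^ (1 - α) / (1 - α)
          * (((N : ℝ) - k + 1) ^ (1 - α) - ((N : ℝ) - k) ^ (1 - α)) := by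
    intro k hk1 hkN
    have hp : 0 < t (k - 1) := htpos _
    have hpq : t (k - 1) ≤ t k := htmono _ _ (Nat.sub_le k 1)
    have hqN : t k ≤ t N := htmono _ _ hkN
    have hcast : ((k - 1 : ℕ) : ℝ) = (k : ℝ) - 1 := by
      rw [Nat.cast_sub hk1, Nat.cast_one]
    have hdq : Real.log (t N / t k) = ((N : ℝ) - k) * ΔT := by
      have h1 : t N / t k = Real.exp (((N : ℝ) - k) * ΔT) := by
        show a * Real.exp ((N : ℝ) * ΔT) / (a * Real.exp ((k : ℝ) * ΔT)) = _
        rw [mul_div_mul_left _ _ ha.ne', ← Real.exp_sub]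
        congr 1; ring
      rw [h1, Real.log_exp]
    have hdp : Real.log (t N / t (k - 1)) = ((N : ℝ) - k + 1) * ΔT := by
      have h1 : t N / t (k - 1) = Real.exp (((N : ℝ) - k + 1) * ΔT) := by
        show a * Real.exp ((N : ℝ) * ΔT) / (a * Real.exp (((k - 1 : ℕ) : ℝ) * ΔT)) = _
        rw [hcast, mul_div_mul_left _ _ ha.ne', ← Real.exp_sub]
        congr 1; ring
      rw [h1, Real.log_exp]
    obtain ⟨hiff, hval⟩ := hadamard_cov hp hpq hqN hdp hdq (fun u => u ^ (-α))
    have hNk : (k : ℝ) ≤ (N : ℝ) := Nat.cast_le.2 hkN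
    have hc0 : 0 ≤ ((N : ℝ) - k) * ΔT := mul_nonneg (by linarith) hΔT.le
    have hcd : ((N : ℝ) - k) * ΔT ≤ ((N : ℝ) - k + 1) * ΔT :=
      mul_le_mul_of_nonneg_right (by linarith) hΔT.le
    constructor
    · apply hiff.2
      rw [integrableOn_Icc_iff_integrableOn_Ioc]
      exact (intervalIntegrable_iff_integrableOn_Ioc_of_le hcd).1
        (intervalIntegrable_rpow' (by linarith))
    · have h1 : (∫ τ in (t (k - 1))..(t k), W τ)
          = ∫ τ in Set.Icc (t (k - 1)) (t k), W τ := by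
        rw [intervalIntegral.integral_of_le hpq, ← integral_Icc_eq_integral_Ioc]
      have h2 : (∫ u in Set.Icc (((N : ℝ) - k) * ΔT) (((N : ℝ) - k + 1) * ΔT),
            (fun u : ℝ => u ^ (-α)) u)
          = ∫ u in (((N : ℝ) - k) * ΔT)..(((N : ℝ) - k + 1) * ΔT), u ^ (-α) := by
        rw [intervalIntegral.integral_of_le hcd, ← integral_Icc_eq_integral_Ioc]
      rw [h1, hval, h2, integral_rpow (Or.inl (by linarith))]
      have he : -α + 1 = 1 - α := by ring
      rw [he]
      rw [Real.mul_rpow (by linarith) hΔT.le, Real.mul_rpow (by linarith) hΔT.le]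
      have h1α : (0 : ℝ) < 1 - α := by linarith
      field_simp
  -- integrability of F and G on each subinterval
  have hFGint : ∀ k : ℕ, 1 ≤ k → k ≤ N →
      IntervalIntegrable F volume (t (k - 1)) (t k) ∧
      IntervalIntegrable (G k) volume (t (k - 1)) (t k) := by
    intro k hk1 hkN
    obtain ⟨hWk, -⟩ := hkfacts k hk1 hkN
    have hpq : t (k - 1) ≤ t k := htmono _ _ (Nat.sub_le k 1)
    have hsub : Set.Icc (t (k - 1)) (t k) ⊆ Set.Icc a b :=
      Set.Icc_subset_Icc (ht0 ▸ htmono 0 (k - 1) (Nat.zero_le _)) (htb k (hkN.trans hNn))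
    constructor
    · have hmul : ContinuousOn (fun τ => τ * x' τ) (Set.Icc (t (k - 1)) (t k)) :=
        continuousOn_id.mul (hx'cont.mono hsub)
      obtain ⟨C, hC⟩ := isCompact_Icc.exists_bound_of_continuousOn hmul
      have hint : IntegrableOn (fun τ => (τ * x' τ) * W τ) (Set.Icc (t (k - 1)) (t k)) :=
        hWk.bdd_mul (hmul.aestronglyMeasurable measurableSet_Icc)
          (ae_restrict_of_forall_mem measurableSet_Icc hC)
      have heq : Set.EqOn (fun τ => (τ * x' τ) * W τ) F (Set.Icc (t (k - 1)) (t k)) := by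
        intro τ hτ
        have hτ0 : τ ≠ 0 := (lt_of_lt_of_le (htpos (k - 1)) hτ.1).ne'
        show (τ * x' τ) * (Real.log (t N / τ) ^ (-α) * (1 / τ))
          = Real.log (t N / τ) ^ (-α) * x' τ
        field_simp
      rw [intervalIntegrable_iff_integrableOn_Ioc_of_le hpq]
      exact ((integrableOn_congr_fun heq measurableSet_Icc).1 hint).mono_set
        Set.Ioc_subset_Icc_self
    · rw [intervalIntegrable_iff_integrableOn_Ioc_of_le hpq]
      have hGint : IntegrableOn
          (fun τ => W τ * ((x (t k) - x (t (k - 1))) / (t k - t (k - 1)) * t k))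
          (Set.Icc (t (k - 1)) (t k)) := hWk.mul_const _
      exact hGint.mono_set Set.Ioc_subset_Icc_self
  -- per-term identity for the quadrature sum
  have hGval : ∀ k : ℕ, 1 ≤ k → k ≤ N →
      ψ * (ω (N - k + 1) * ((x (t k) - x (t (k - 1))) / Real.exp (k * ΔT)) * t k)
        = (1 / Real.Gamma (1 - α)) * ∫ τ in (t (k - 1))..(t k), G k τ := by
    intro k hk1 hkN
    obtain ⟨-, hval⟩ := hkfacts k hk1 hkN
    have hGW : (∫ τ in (t (k - 1))..(t k), G k τ)
        = (∫ τ in (t (k - 1))..(t k), W τ)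
          * ((x (t k) - x (t (k - 1))) / (t k - t (k - 1)) * t k) := by
      rw [← intervalIntegral.integral_mul_const]
    have hωcast : ω (N - k + 1)
        = ((N : ℝ) - k + 1) ^ (1 - α) - ((N : ℝ) - k) ^ (1 - α) := by
      show ((N - k + 1 : ℕ) : ℝ) ^ (1 - α) - (((N - k + 1 : ℕ) : ℝ) - 1) ^ (1 - α) = _
      have h1 : ((N - k + 1 : ℕ) : ℝ) = (N : ℝ) - k + 1 := by
        rw [Nat.cast_add, Nat.cast_sub hkN, Nat.cast_one]
      rw [h1]
      norm_num
    have hcast : ((k - 1 : ℕ) : ℝ) = (k : ℝ) - 1 := by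
      rw [Nat.cast_sub hk1, Nat.cast_one]
    have hqp : t k - t (k - 1) = a * Real.exp ((k : ℝ) * ΔT) * (1 - Real.exp (-ΔT)) := by
      show a * Real.exp ((k : ℝ) * ΔT) - a * Real.exp (((k - 1 : ℕ) : ℝ) * ΔT) = _
      rw [hcast]
      have h1 : Real.exp (((k : ℝ) - 1) * ΔT)
          = Real.exp ((k : ℝ) * ΔT) * Real.exp (-ΔT) := by
        rw [← Real.exp_add]; congr 1; ring
      rw [h1]; ring
    have hexp1 : 0 < 1 - Real.exp (-ΔT) := by
      have h1 : Real.exp (-ΔT) < Real.exp 0 := Real.exp_lt_exp.2 (by linarith)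
      rw [Real.exp_zero] at h1
      linarith
    have hΓ2 : Real.Gamma (2 - α) = (1 - α) * Real.Gamma (1 - α) := by
      have h : (2 : ℝ) - α = (1 - α) + 1 := by ring
      rw [h, Real.Gamma_add_one (by linarith : (1 : ℝ) - α ≠ 0)]
    have h1α : (1 : ℝ) - α ≠ 0 := by linarith
    rw [hGW, hval, hωcast, hqp]
    show ΔT ^ (1 - α) / (a * (1 - Real.exp (-ΔT)) * Real.Gamma (2 - α)) * _ = _
    rw [hΓ2]
    have htk : t k = a * Real.exp ((k : ℝ) * ΔT) := rfl
    rw [htk]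
    have hek : Real.exp ((k : ℝ) * ΔT) ≠ 0 := Real.exp_ne_zero _
    field_simp
  -- splitting the main integral
  have hFsplit : (∫ τ in a..(t N), Real.log (t N / τ) ^ (-α) * x' τ)
      = ∑ k ∈ Finset.Icc 1 N, ∫ τ in (t (k - 1))..(t k), F τ := by
    have hint : ∀ m : ℕ, m < N → IntervalIntegrable F volume (t m) (t (m + 1)) := by
      intro m hm
      exact (hFGint (m + 1) (Nat.le_add_left 1 m) (Nat.succ_le_of_lt hm)).1
    have h := intervalIntegral.sum_integral_adjacent_intervals hint
    rw [ht0] at h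
    rw [← h]
    rw [show Finset.Icc 1 N = Finset.Ico 1 (N + 1) from (Finset.Ico_add_one_right_eq_Icc 1 N).symm,
      Finset.sum_Ico_eq_sum_range]
    simp only [Nat.add_sub_cancel]
    apply Finset.sum_congr rfl
    intro j _
    congr 1
    · exact congrArg t (by omega)
    · exact congrArg t (by omega)
  -- the quadrature sum identity
  have hsum2 : ψ * ∑ k ∈ Finset.Icc 1 N,
        ω (N - k + 1) * ((x (t k) - x (t (k - 1))) / Real.exp (k * ΔT)) * t k
      = (1 / Real.Gamma (1 - α))
        * ∑ k ∈ Finset.Icc 1 N, ∫ τ in (t (k - 1))..(t k), G k τ := by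
    rw [Finset.mul_sum, Finset.mul_sum]
    apply Finset.sum_congr rfl
    intro k hk
    obtain ⟨hk1, hkN⟩ := Finset.mem_Icc.1 hk
    exact hGval k hk1 hkN
  -- per-term error bound
  have hperk : ∀ k : ℕ, 1 ≤ k → k ≤ N →
      |(∫ τ in (t (k - 1))..(t k), F τ) - ∫ τ in (t (k - 1))..(t k), G k τ|
        ≤ ∫ τ in (t (k - 1))..(t k),
            Real.log (t N / τ) ^ (-α) * (1 / τ)
              * |x' τ * τ - (x (t k) - x (t (k - 1))) / (t k - t (k - 1)) * t k| := by
    intro k hk1 hkN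
    obtain ⟨hFk, hGk⟩ := hFGint k hk1 hkN
    have hpq : t (k - 1) ≤ t k := htmono _ _ (Nat.sub_le k 1)
    rw [← intervalIntegral.integral_sub hFk hGk]
    refine (intervalIntegral.abs_integral_le_integral_abs hpq).trans (le_of_eq ?_)
    apply intervalIntegral.integral_congr
    intro τ hτ
    rw [Set.uIcc_of_le hpq] at hτ
    have hτ0 : 0 < τ := lt_of_lt_of_le (htpos (k - 1)) hτ.1
    have hτN : τ ≤ t N := hτ.2.trans (htmono _ _ hkN)
    have hlog : 0 ≤ Real.log (t N / τ) :=
      Real.log_nonneg ((one_le_div hτ0).2 hτN)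
    have hw : 0 ≤ Real.log (t N / τ) ^ (-α) := Real.rpow_nonneg hlog _
    show |F τ - G k τ| = _
    have hdiff : F τ - G k τ
        = Real.log (t N / τ) ^ (-α) * (1 / τ)
          * (x' τ * τ - (x (t k) - x (t (k - 1))) / (t k - t (k - 1)) * t k) := by
      simp only [hF, hG]
      generalize (x (t k) - x (t (k - 1))) / (t k - t (k - 1)) * t k = C
      generalize Real.log (t N / τ) ^ (-α) = w
      field_simp
    rw [hdiff, abs_mul, abs_of_nonneg (mul_nonneg hw (by positivity))]
  -- assembling
  have hE : D - x a / Real.Gamma (1 - α) * Real.log (t N / a) ^ (-α)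
      - ψ * ∑ k ∈ Finset.Icc 1 N,
          ω (N - k + 1) * ((x (t k) - x (t (k - 1))) / Real.exp (k * ΔT)) * t k
      = (1 / Real.Gamma (1 - α)) * ∑ k ∈ Finset.Icc 1 N,
          ((∫ τ in (t (k - 1))..(t k), F τ) - ∫ τ in (t (k - 1))..(t k), G k τ) := by
    have hD : D = x a / Real.Gamma (1 - α) * Real.log (t N / a) ^ (-α)
        + (1 / Real.Gamma (1 - α))
          * ∫ τ in a..(t N), Real.log (t N / τ) ^ (-α) * x' τ := rfl
    rw [hD, hFsplit, hsum2, Finset.sum_sub_distrib]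
    ring
  rw [hE, abs_mul, abs_of_nonneg (by positivity : (0 : ℝ) ≤ 1 / Real.Gamma (1 - α))]
  apply mul_le_mul_of_nonneg_left _ (by positivity)
  calc |∑ k ∈ Finset.Icc 1 N,
      ((∫ τ in (t (k - 1))..(t k), F τ) - ∫ τ in (t (k - 1))..(t k), G k τ)|
      ≤ ∑ k ∈ Finset.Icc 1 N,
        |(∫ τ in (t (k - 1))..(t k), F τ) - ∫ τ in (t (k - 1))..(t k), G k τ| :=
        Finset.abs_sum_le_sum_abs _ _
    _ ≤ _ := by
        apply Finset.sum_le_sum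
        intro k hk
        obtain ⟨hk1, hkN⟩ := Finset.mem_Icc.1 hk
        exact hperk k hk1 hkN
end
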